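/- Let R be a commutative ring, let Y be an n×(n+1) matrix over R, and let A be an (n+1)×(n+1) matrix over R. For any n×(n+1) matrix Z over R and 1 ≤ k ≤ n+1, write Δ_k(Z) = (−1)^k times the determinant of the n×n matrix obtained from Z by deleting column k. Then for every k ∈ {1, …, n+1}, Δ_k(Y · Aᵀ) = ∑_{j=1}^{n+1} Δ_j(Y) · (adj A)_{jk}, where adj A is the adjugate matrix of A. Equivalently, the row vector of signed maximal minors of Y·Aᵀ equals the row vector of signed maximal minors of Y multiplied on the right by the adjugate of A. -/

import Mathlib

open Matrix
/-- `Δ_k(Z) = (-1)^k` times the determinant of the `n × n` matrix obtained from the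
`n × (n+1)` matrix `Z` by deleting column `k` (with `k` counted starting from `1`, i.e. the
sign is `(-1)^(k+1)` for `k : Fin (n+1)`). -/
def signedMinor {R : Type*} [CommRing R] {n : ℕ} (Z : Matrix (Fin n) (Fin (n + 1)) R)
    (k : Fin (n + 1)) : R :=
  (-1) ^ ((k : ℕ) + 1) * (Z.submatrix id k.succAbove).det

/-!
Expanding along the first row, the determinant of `Y` with a row `v` stacked on top is
`-∑ j, v j * Δ_j(Y)`. Stack column `k` of `adj A` on top of `Y`: multiplying by `Aᵀ` turns this row
into `det A` times the `k`-th unit vector, so the multiplicativity of `det` gives the identity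
multiplied by `det A`. To cancel `det A`, pass to `R[X]` and replace `A` by `X • 1 + A`, whose
determinant `charpoly (-A)` is monic and hence regular; then evaluate at `X = 0`.
-/

open Polynomial

section
variable {R : Type*} [CommRing R] {n : ℕ}

theorem det_eq_neg_sum_mul_signedMinor (M : Matrix (Fin (n + 1)) (Fin (n + 1)) R) :
    M.det = -∑ j, M 0 j * signedMinor (M.submatrix Fin.succ id) j := by
  rw [det_succ_row_zero, ← Finset.sum_neg_distrib]
  refine Finset.sum_congr rfl fun j _ => ?_
  rw [signedMinor, submatrix_submatrix, Function.comp_id, Function.id_comp]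
  ring

theorem map_signedMinor {S : Type*} [CommRing S] (f : R →+* S)
    (Z : Matrix (Fin n) (Fin (n + 1)) R) (k : Fin (n + 1)) :
    signedMinor (Z.map f) k = f (signedMinor Z k) := by
  rw [signedMinor, signedMinor, submatrix_map, ← RingHom.mapMatrix_apply, ← RingHom.map_det]
  simp

theorem det_mul_signedMinor_mul_transpose (Y : Matrix (Fin n) (Fin (n + 1)) R)
    (A : Matrix (Fin (n + 1)) (Fin (n + 1)) R) (k : Fin (n + 1)) :
    A.det * signedMinor (Y * Aᵀ) k = A.det * ∑ j, signedMinor Y j * A.adjugate j k := by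
  let B : Matrix (Fin (n + 1)) (Fin (n + 1)) R := of (Fin.cons (fun j => A.adjugate j k) Y)
  have hB : B.det = -∑ j, signedMinor Y j * A.adjugate j k := by
    rw [det_eq_neg_sum_mul_signedMinor]
    exact congrArg Neg.neg (Finset.sum_congr rfl fun j _ => mul_comm _ _)
  have hrow : ∀ i, (B * Aᵀ) 0 i = A.det * (1 : Matrix _ _ R) i k := fun i => by
    have h : (A * A.adjugate) i k = A.det * (1 : Matrix _ _ R) i k := by simp [mul_adjugate]
    rw [← h, mul_apply, mul_apply]
    exact Finset.sum_congr rfl fun j _ => mul_comm _ _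
  have hBA : (B * Aᵀ).det = -(A.det * signedMinor (Y * Aᵀ) k) := by
    rw [det_eq_neg_sum_mul_signedMinor, show (B * Aᵀ).submatrix Fin.succ id = Y * Aᵀ from rfl]
    simp [hrow, one_apply]
  have h := det_mul B Aᵀ
  rw [hB, hBA, det_transpose] at h
  linear_combination -h

theorem signedMinor_mul_transpose_of_isLeftRegular (Y : Matrix (Fin n) (Fin (n + 1)) R)
    {A : Matrix (Fin (n + 1)) (Fin (n + 1)) R} (hA : IsLeftRegular A.det) (k : Fin (n + 1)) :
    signedMinor (Y * Aᵀ) k = ∑ j, signedMinor Y j * A.adjugate j k :=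
  hA (det_mul_signedMinor_mul_transpose Y A k)

theorem signedMinor_mul_transpose_map {S : Type*} [CommRing S] (f : R →+* S)
    {Y : Matrix (Fin n) (Fin (n + 1)) R} {A : Matrix (Fin (n + 1)) (Fin (n + 1)) R}
    {k : Fin (n + 1)} (h : signedMinor (Y * Aᵀ) k = ∑ j, signedMinor Y j * A.adjugate j k) :
    signedMinor (Y.map f * (A.map f)ᵀ) k
      = ∑ j, signedMinor (Y.map f) j * (A.map f).adjugate j k := by
  rw [← transpose_map, ← Matrix.map_mul, map_signedMinor, h, map_sum]
  refine Finset.sum_congr rfl fun j _ => ?_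
  rw [_root_.map_mul, map_signedMinor, ← RingHom.mapMatrix_apply, ← RingHom.map_adjugate]
  rfl

theorem map_eval_zero_charmatrix_neg {m : Type*} [Fintype m] [DecidableEq m] (A : Matrix m m R) :
    (charmatrix (-A)).map (evalRingHom 0) = A := by
  ext i j
  by_cases h : i = j <;> simp [h]
end

/-- The row vector of signed maximal minors of `Y * Aᵀ` equals the row vector of signed maximal
minors of `Y` multiplied on the right by the adjugate of `A`:
`Δ_k(Y·Aᵀ) = ∑ j, Δ_j(Y) (adj A)_{jk}`. -/
theorem signedMinor_mul_transpose {R : Type*} [CommRing R] {n : ℕ}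
    (Y : Matrix (Fin n) (Fin (n + 1)) R) (A : Matrix (Fin (n + 1)) (Fin (n + 1)) R)
    (k : Fin (n + 1)) :
    signedMinor (Y * Aᵀ) k = ∑ j : Fin (n + 1), signedMinor Y j * A.adjugate j k := by
  have hY : (Y.map C).map (evalRingHom 0) = Y := by ext; simp
  have h := signedMinor_mul_transpose_map (evalRingHom 0) <|
    signedMinor_mul_transpose_of_isLeftRegular (Y.map C) (charpoly_monic (-A)).isRegular.left k
  rwa [hY, map_eval_zero_charmatrix_neg] at h
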